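/- arXiv:1811.11056 — 2 statements merged into one kernel-verified Lean document; each statement's English description precedes it below -/
import Mathlib

section
/- Let m₁, m₂ be coprime positive integers with α₁/α₂ = m₁/m₂, and set T = 2π·m₁/α₁. Then ∫₀ᵀ √(κ₁(t)² + κ₂(t)² + κ₃(t)²)·‖x′(t)‖ dt = 2π·√(m₁² + m₂²), where κ₁, κ₂, κ₃ are the first three Frenet curvatures of x. -/
open Real intervalIntegral

/-- The curve `x(t) = (a₁ cos(α₁ t), a₁ sin(α₁ t), a₂ cos(α₂ t), a₂ sin(α₂ t))` in `ℝ⁴`. -/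
noncomputable def curveX (a₁ a₂ α₁ α₂ : ℝ) : ℝ → EuclideanSpace ℝ (Fin 4) :=
  fun t => (WithLp.equiv 2 (Fin 4 → ℝ)).symm
    ![a₁ * Real.cos (α₁ * t), a₁ * Real.sin (α₁ * t),
      a₂ * Real.cos (α₂ * t), a₂ * Real.sin (α₂ * t)]

/-- `D_j(t)`: the determinant of the `j × j` Gram matrix whose `(a,b)` entry is the inner
product of the `a`-th and `b`-th derivatives of `y` at `t` (`1 ≤ a, b ≤ j`); `D₀ = 1`. -/
noncomputable def gramDet {n : ℕ} (y : ℝ → EuclideanSpace ℝ (Fin n)) (j : ℕ) (t : ℝ) : ℝ :=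
  Matrix.det (Matrix.of fun a b : Fin j =>
    (inner ℝ (iteratedDeriv (a.val + 1) y t) (iteratedDeriv (b.val + 1) y t) : ℝ))

/-- The `j`-th Frenet curvature `κ_j(t) = √(D_{j+1} D_{j-1}) / (D_j ‖y′(t)‖)` (for `j ≥ 1`). -/
noncomputable def frenetCurvature {n : ℕ} (y : ℝ → EuclideanSpace ℝ (Fin n)) (j : ℕ) (t : ℝ) :
    ℝ :=
  Real.sqrt (gramDet y (j + 1) t * gramDet y (j - 1) t) / (gramDet y j t * ‖deriv y t‖)

/-- The Plücker coordinates `w(t)` of the exterior product of `x′(t)` and `x″(t)`. -/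
noncomputable def oscW (x : ℝ → EuclideanSpace ℝ (Fin 4)) (t : ℝ) : EuclideanSpace ℝ (Fin 6) :=
  (WithLp.equiv 2 (Fin 6 → ℝ)).symm
    ![deriv x t 0 * deriv (deriv x) t 1 - deriv x t 1 * deriv (deriv x) t 0,
      deriv x t 0 * deriv (deriv x) t 2 - deriv x t 2 * deriv (deriv x) t 0,
      deriv x t 0 * deriv (deriv x) t 3 - deriv x t 3 * deriv (deriv x) t 0,
      deriv x t 1 * deriv (deriv x) t 2 - deriv x t 2 * deriv (deriv x) t 1,
      deriv x t 1 * deriv (deriv x) t 3 - deriv x t 3 * deriv (deriv x) t 1,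
      deriv x t 2 * deriv (deriv x) t 3 - deriv x t 3 * deriv (deriv x) t 2]

/-- The osculating indicatrix `x̃(t) = w(t) / ‖w(t)‖`. -/
noncomputable def oscInd (x : ℝ → EuclideanSpace ℝ (Fin 4)) (t : ℝ) :
    EuclideanSpace ℝ (Fin 6) :=
  ‖oscW x t‖⁻¹ • oscW x t

/-!
The Gram entries `⟪x⁽ᵃ⁾, x⁽ᵇ⁾⟫ = (a₁² α₁^(a+b) + a₂² α₂^(a+b)) cos ((a - b) π / 2)` do not depend
on `t`, so every Frenet curvature of `x` is constant. Writing `Mₖ = a₁² α₁ᵏ + a₂² α₂ᵏ`, the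
Gram determinants are `M₂`, `M₂ M₄`, `M₄ H₂` and `H₂ H₄` with Hankel minors
`Hₖ = Mₖ Mₖ₊₄ - Mₖ₊₂² = a₁² a₂² (α₁ α₂)ᵏ (α₁² - α₂²)²`, and then
`(κ₁² + κ₂² + κ₃²) ‖x′‖² = α₁² + α₂²`. The integrand is the constant `√(α₁² + α₂²)`, and
`α₂ = α₁ m₂ / m₁` turns `T √(α₁² + α₂²)` into `2π √(m₁² + m₂²)`.
-/

theorem hasDerivAt_toLp {ι : Type*} [Fintype ι] (p : ENNReal) [Fact (1 ≤ p)]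
    {φ : ℝ → ι → ℝ} {φ' : ι → ℝ} {t : ℝ} (h : ∀ i, HasDerivAt (fun s => φ s i) (φ' i) t) :
    HasDerivAt (fun s => WithLp.toLp p (φ s)) (WithLp.toLp p φ') t :=
  (PiLp.hasFDerivAt_toLp p (φ t)).comp_hasDerivAt t (hasDerivAt_pi.2 h)

theorem hasDerivAt_mul_cos_mul_add (a c φ t : ℝ) :
    HasDerivAt (fun s => a * cos (c * s + φ)) (a * c * cos (c * t + (φ + π / 2))) t := by
  have h := (((hasDerivAt_id t).const_mul c).add_const φ).cos.const_mul a
  refine h.congr_deriv ?_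
  rw [← add_assoc, cos_add_pi_div_two, id]
  ring

theorem hasDerivAt_mul_sin_mul_add (a c φ t : ℝ) :
    HasDerivAt (fun s => a * sin (c * s + φ)) (a * c * sin (c * t + (φ + π / 2))) t := by
  have h := (((hasDerivAt_id t).const_mul c).add_const φ).sin.const_mul a
  refine h.congr_deriv ?_
  rw [← add_assoc, sin_add_pi_div_two, id]
  ring

theorem cos_two_mul_pi_div_two : cos (2 * (π / 2)) = -1 := by
  rw [mul_div_cancel₀ π two_ne_zero, cos_pi]

theorem cos_three_mul_pi_div_two : cos (3 * (π / 2)) = 0 := by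
  rw [show (3 : ℝ) * (π / 2) = π / 2 + π by ring, cos_add_pi, cos_pi_div_two, neg_zero]

theorem det_checkerboard_four (p q r s : ℝ) :
    !![p, 0, -q, 0; 0, q, 0, -r; -q, 0, r, 0; 0, -r, 0, s].det
      = (p * r - q ^ 2) * (q * s - r ^ 2) := by
  simp [Matrix.det_succ_row_zero, Fin.sum_univ_succ, Fin.succAbove]
  ring

theorem gramDet_zero {n : ℕ} (y : ℝ → EuclideanSpace ℝ (Fin n)) (t : ℝ) : gramDet y 0 t = 1 :=
  Matrix.det_isEmpty

theorem sq_frenetCurvature_mul_sq_norm_deriv {n : ℕ} (y : ℝ → EuclideanSpace ℝ (Fin n)) (j : ℕ)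
    (t : ℝ) (hD : 0 ≤ gramDet y (j + 1) t * gramDet y (j - 1) t) (hy : deriv y t ≠ 0) :
    frenetCurvature y j t ^ 2 * ‖deriv y t‖ ^ 2
      = gramDet y (j + 1) t * gramDet y (j - 1) t / gramDet y j t ^ 2 := by
  rw [frenetCurvature, div_pow, sq_sqrt hD, mul_pow, ← div_div,
    div_mul_cancel₀ _ (pow_ne_zero 2 (norm_ne_zero_iff.2 hy))]

theorem div_mul_sqrt_sq_add_sq_of_div_eq_div {α₁ α₂ m₁ m₂ : ℝ} (hα₁ : 0 < α₁) (hα₂ : α₂ ≠ 0)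
    (hm₁ : 0 < m₁) (hm₂ : m₂ ≠ 0) (h : α₁ / α₂ = m₁ / m₂) :
    m₁ / α₁ * sqrt (α₁ ^ 2 + α₂ ^ 2) = sqrt (m₁ ^ 2 + m₂ ^ 2) := by
  have hα₂_eq : α₂ = α₁ * m₂ / m₁ := by
    rw [div_eq_div_iff hα₂ hm₂] at h
    field_simp
    linarith
  rw [← sqrt_sq (div_pos hm₁ hα₁).le, ← sqrt_mul (sq_nonneg _), hα₂_eq]
  congr 1
  field_simp

def powerMoment (a₁ a₂ α₁ α₂ : ℝ) (k : ℕ) : ℝ := a₁ ^ 2 * α₁ ^ k + a₂ ^ 2 * α₂ ^ k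

section Curve

variable (a₁ a₂ α₁ α₂ : ℝ)

local notation "M" => powerMoment a₁ a₂ α₁ α₂

local notation "X" => curveX a₁ a₂ α₁ α₂

theorem powerMoment_hankel (k : ℕ) :
    M k * M (k + 4) - M (k + 2) ^ 2 = a₁ ^ 2 * a₂ ^ 2 * (α₁ * α₂) ^ k * (α₁ ^ 2 - α₂ ^ 2) ^ 2 := by
  simp only [powerMoment]
  ring

theorem iteratedDeriv_curveX (n : ℕ) (t : ℝ) :
    iteratedDeriv n X t = WithLp.toLp 2
      ![a₁ * α₁ ^ n * cos (α₁ * t + n * (π / 2)), a₁ * α₁ ^ n * sin (α₁ * t + n * (π / 2)),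
        a₂ * α₂ ^ n * cos (α₂ * t + n * (π / 2)), a₂ * α₂ ^ n * sin (α₂ * t + n * (π / 2))] := by
  induction n generalizing t with
  | zero => simp [curveX]
  | succ n ih =>
    rw [iteratedDeriv_succ, funext ih]
    refine HasDerivAt.deriv (hasDerivAt_toLp 2 fun i => ?_)
    have hphase : ((n + 1 : ℕ) : ℝ) * (π / 2) = n * (π / 2) + π / 2 := by push_cast; ring
    fin_cases i <;> simp only [Fin.mk_one, Fin.reduceFinMk, Fin.zero_eta, Matrix.cons_val] <;>
      rw [hphase, pow_succ, ← mul_assoc]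
    exacts [hasDerivAt_mul_cos_mul_add .., hasDerivAt_mul_sin_mul_add ..,
      hasDerivAt_mul_cos_mul_add .., hasDerivAt_mul_sin_mul_add ..]

theorem inner_iteratedDeriv_curveX (a b : ℕ) (t : ℝ) :
    inner ℝ (iteratedDeriv a X t) (iteratedDeriv b X t) = M (a + b) * cos ((a - b : ℝ) * (π / 2)) := by
  have hcos (α : ℝ) : cos (α * t + a * (π / 2)) * cos (α * t + b * (π / 2))
      + sin (α * t + a * (π / 2)) * sin (α * t + b * (π / 2)) = cos ((a - b : ℝ) * (π / 2)) := by
    rw [← cos_sub]; ring_nf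
  simp only [iteratedDeriv_curveX, PiLp.inner_apply, Fin.sum_univ_four, RCLike.inner_apply,
    conj_trivial, Matrix.cons_val, powerMoment]
  linear_combination (a₁ ^ 2 * α₁ ^ (a + b)) * hcos α₁ + (a₂ ^ 2 * α₂ ^ (a + b)) * hcos α₂

variable (t : ℝ)

theorem sq_norm_deriv_curveX : ‖deriv X t‖ ^ 2 = M 2 := by
  rw [← real_inner_self_eq_norm_sq, ← iteratedDeriv_one, inner_iteratedDeriv_curveX]
  norm_num

theorem gramDet_curveX_one : gramDet X 1 t = M 2 := by
  simp only [gramDet, Matrix.det_fin_one, Matrix.of_apply, inner_iteratedDeriv_curveX]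
  norm_num

theorem gramDet_curveX_two : gramDet X 2 t = M 2 * M 4 := by
  simp only [gramDet, Matrix.det_fin_two, Matrix.of_apply, inner_iteratedDeriv_curveX]
  norm_num

theorem gramDet_curveX_three : gramDet X 3 t = M 4 * (M 2 * M 6 - M 4 ^ 2) := by
  simp only [gramDet, Matrix.det_fin_three, Matrix.of_apply, inner_iteratedDeriv_curveX]
  norm_num [cos_two_mul_pi_div_two]
  ring

theorem gramDet_curveX_four :
    gramDet X 4 t = (M 2 * M 6 - M 4 ^ 2) * (M 4 * M 8 - M 6 ^ 2) := by
  rw [gramDet, ← det_checkerboard_four]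
  congr 1
  ext a b
  fin_cases a <;> fin_cases b <;>
    norm_num [inner_iteratedDeriv_curveX, cos_two_mul_pi_div_two, cos_three_mul_pi_div_two]

theorem sum_sq_frenetCurvature_curveX_mul_sq_norm_deriv (ha₁ : a₁ ≠ 0) (ha₂ : a₂ ≠ 0)
    (hα₁ : α₁ ≠ 0) (hα₂ : α₂ ≠ 0) (hα : α₁ ^ 2 ≠ α₂ ^ 2) :
    (frenetCurvature X 1 t ^ 2 + frenetCurvature X 2 t ^ 2 + frenetCurvature X 3 t ^ 2)
      * ‖deriv X t‖ ^ 2 = α₁ ^ 2 + α₂ ^ 2 := by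
  have hM2 : 0 < M 2 := by unfold powerMoment; positivity
  have hM4 : 0 < M 4 := by unfold powerMoment; positivity
  have hH2 := powerMoment_hankel a₁ a₂ α₁ α₂ 2
  have hH4 := powerMoment_hankel a₁ a₂ α₁ α₂ 4
  have hH2_pos : 0 < M 2 * M 6 - M 4 ^ 2 := by rw [hH2]; have := sub_ne_zero.2 hα; positivity
  have hH4_nonneg : 0 ≤ M 4 * M 8 - M 6 ^ 2 := by rw [hH4]; positivity
  have hD1 : 0 ≤ gramDet X 2 t * gramDet X 0 t := by
    rw [gramDet_curveX_two, gramDet_zero]; positivity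
  have hD2 : 0 ≤ gramDet X 3 t * gramDet X 1 t := by
    rw [gramDet_curveX_three, gramDet_curveX_one]; positivity
  have hD3 : 0 ≤ gramDet X 4 t * gramDet X 2 t := by
    rw [gramDet_curveX_four, gramDet_curveX_two]; positivity
  have hX : deriv X t ≠ 0 := by
    rw [← norm_ne_zero_iff, ← pow_ne_zero_iff two_ne_zero, sq_norm_deriv_curveX]
    exact hM2.ne'
  rw [add_mul, add_mul, sq_frenetCurvature_mul_sq_norm_deriv _ 1 t hD1 hX,
    sq_frenetCurvature_mul_sq_norm_deriv _ 2 t hD2 hX,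
    sq_frenetCurvature_mul_sq_norm_deriv _ 3 t hD3 hX]
  simp only [Nat.reduceAdd, Nat.reduceSub, gramDet_zero, gramDet_curveX_one, gramDet_curveX_two,
    gramDet_curveX_three, gramDet_curveX_four]
  rw [hH2, hH4]
  field_simp
  simp only [powerMoment]
  ring

end Curve

theorem stmt8_general (a₁ a₂ α₁ α₂ : ℝ) (ha₁ : 0 < a₁) (ha₂ : 0 < a₂)
    (hα₁ : 0 < α₁) (hα₂ : 0 < α₂) (hne : α₁ ≠ α₂)
    (m₁ m₂ : ℕ) (hm₁ : 0 < m₁) (hm₂ : 0 < m₂)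
    (hratio : α₁ / α₂ = (m₁ : ℝ) / (m₂ : ℝ)) (T : ℝ) (hT : T = 2 * Real.pi * m₁ / α₁) :
    (∫ t in (0:ℝ)..T,
      Real.sqrt (frenetCurvature (curveX a₁ a₂ α₁ α₂) 1 t ^ 2 + frenetCurvature (curveX a₁ a₂ α₁ α₂) 2 t ^ 2
        + frenetCurvature (curveX a₁ a₂ α₁ α₂) 3 t ^ 2) * ‖deriv (curveX a₁ a₂ α₁ α₂) t‖) = 2 * Real.pi * Real.sqrt ((m₁ : ℝ) ^ 2 + (m₂ : ℝ) ^ 2) := by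
  have hα : α₁ ^ 2 ≠ α₂ ^ 2 := fun h => hne ((sq_eq_sq₀ hα₁.le hα₂.le).1 h)
  have hintegrand (t : ℝ) :
      sqrt (frenetCurvature (curveX a₁ a₂ α₁ α₂) 1 t ^ 2
        + frenetCurvature (curveX a₁ a₂ α₁ α₂) 2 t ^ 2
        + frenetCurvature (curveX a₁ a₂ α₁ α₂) 3 t ^ 2) * ‖deriv (curveX a₁ a₂ α₁ α₂) t‖
      = sqrt (α₁ ^ 2 + α₂ ^ 2) := by
    rw [← sum_sq_frenetCurvature_curveX_mul_sq_norm_deriv a₁ a₂ α₁ α₂ t ha₁.ne' ha₂.ne' hα₁.ne'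
      hα₂.ne' hα, sqrt_mul' _ (sq_nonneg _), sqrt_sq (norm_nonneg _)]
  simp only [hintegrand, integral_const, smul_eq_mul, sub_zero, hT]
  rw [← div_mul_sqrt_sq_add_sq_of_div_eq_div hα₁ hα₂.ne' (Nat.cast_pos.2 hm₁)
    (Nat.cast_ne_zero.2 hm₂.ne') hratio]
  ring

theorem stmt8 (a₁ a₂ α₁ α₂ : ℝ) (ha₁ : 0 < a₁) (ha₂ : 0 < a₂)
    (hα₁ : 0 < α₁) (hα₂ : 0 < α₂) (hne : α₁ ≠ α₂)
    (m₁ m₂ : ℕ) (hm₁ : 0 < m₁) (hm₂ : 0 < m₂) (hcop : Nat.Coprime m₁ m₂)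
    (hratio : α₁ / α₂ = (m₁ : ℝ) / (m₂ : ℝ)) (T : ℝ) (hT : T = 2 * Real.pi * m₁ / α₁) :
    (∫ t in (0:ℝ)..T,
      Real.sqrt (frenetCurvature (curveX a₁ a₂ α₁ α₂) 1 t ^ 2 + frenetCurvature (curveX a₁ a₂ α₁ α₂) 2 t ^ 2
        + frenetCurvature (curveX a₁ a₂ α₁ α₂) 3 t ^ 2) * ‖deriv (curveX a₁ a₂ α₁ α₂) t‖) = 2 * Real.pi * Real.sqrt ((m₁ : ℝ) ^ 2 + (m₂ : ℝ) ^ 2) :=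
  stmt8_general a₁ a₂ α₁ α₂ ha₁ ha₂ hα₁ hα₂ hne m₁ m₂ hm₁ hm₂ hratio T hT
end

section
/- For every t ∈ ℝ, the third Frenet curvature of the osculating indicatrix x̃ (as a curve in ℝ⁶) satisfies κ̃₃(t) = λ / (a₁a₂α₁α₂·√(α₁² + α₂²)); in particular κ̃₃ is constant. -/
open Real intervalIntegral

/-!
Along `x` the velocity and acceleration are orthogonal and of constant length, so by Lagrange's
identity `‖w‖ = ‖x′‖ ‖x″‖ = λ` is constant. Expanding the Plücker coordinates with the addition
formulas gives `w(t) = c + L (y(t))` with `c` constant, `L : ℝ⁴ → ℝ⁶` a linear isometry and `y` a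
curve of the same shape as `x`, with frequencies `α₁ - α₂` and `α₁ + α₂`. Frenet curvatures are
invariant under translations and linear isometries and scale by `|s|⁻¹` under `y ↦ s • y`, so
`κ̃₃ = λ κ₃(y)`. For a curve of the shape of `x`, the Gram matrix of `x′, …, x⁗` has the
checkerboard form `(±m_{a+b})` with `m_k = a₁² α₁ᵏ + a₂² α₂ᵏ`, whence
`κ₃ = |α₁ α₂| / √(a₁² α₁⁴ + a₂² α₂⁴)`.
-/

theorem ContinuousLinearMap.iteratedDeriv_comp_left {𝕜 E F : Type*} [NontriviallyNormedField 𝕜]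
    [NormedAddCommGroup E] [NormedSpace 𝕜 E] [NormedAddCommGroup F] [NormedSpace 𝕜 F]
    (g : E →L[𝕜] F) {f : 𝕜 → E} {k : WithTop ℕ∞} (hf : ContDiff 𝕜 k f) {i : ℕ} (hi : i ≤ k)
    (t : 𝕜) : iteratedDeriv i (fun s => g (f s)) t = g (iteratedDeriv i f t) := by
  simp [iteratedDeriv_eq_iteratedFDeriv, ← Function.comp_def g f,
    g.iteratedFDeriv_comp_left hf.contDiffAt hi]

theorem hasDerivAt_euclideanSpace {n : ℕ} {f : ℝ → EuclideanSpace ℝ (Fin n)}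
    {f' : EuclideanSpace ℝ (Fin n)} {t : ℝ} (h : ∀ i, HasDerivAt (fun s => f s i) (f' i) t) :
    HasDerivAt f f' t :=
  (PiLp.continuousLinearEquiv 2 ℝ (fun _ : Fin n => ℝ)).symm.hasFDerivAt.comp_hasDerivAt t
    (hasDerivAt_pi.2 h)

theorem hasDerivAt_mul_cos_mul (a ω t : ℝ) :
    HasDerivAt (fun s => a * cos (ω * s)) (-(a * ω) * sin (ω * t)) t :=
  ((((hasDerivAt_id' t).const_mul ω).cos).const_mul a).congr_deriv (by ring)

theorem hasDerivAt_mul_sin_mul (a ω t : ℝ) :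
    HasDerivAt (fun s => a * sin (ω * s)) (a * ω * cos (ω * t)) t :=
  ((((hasDerivAt_id' t).const_mul ω).sin).const_mul a).congr_deriv (by ring)

theorem Matrix.det_checkerboard {R : Type*} [CommRing R] (a b c d e f : R) :
    !![a, 0, b, 0; 0, c, 0, d; b, 0, e, 0; 0, d, 0, f].det = (a * e - b ^ 2) * (c * f - d ^ 2) := by
  rw [Matrix.det_succ_row_zero, Fin.sum_univ_four]
  simp only [Nat.succ_eq_add_one, Nat.reduceAdd, Fin.isValue, Fin.coe_ofNat_eq_mod, Nat.zero_mod,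
    pow_zero, of_apply, cons_val', cons_val_zero, cons_val_fin_one, one_mul, Fin.succAbove_zero,
    det_fin_three, submatrix_apply, Fin.succ_zero_eq_one, cons_val_one, Fin.succ_one_eq_two,
    cons_val, Fin.reduceSucc, mul_zero, sub_zero, zero_mul, add_zero, Nat.one_mod, pow_one,
    Fin.succAbove, Fin.castSucc_zero, zero_lt_one, ↓reduceIte, Fin.castSucc_one, lt_self_iff_false,
    Fin.reduceCastSucc, Fin.lt_one_iff, Fin.reduceEq, sub_self, Nat.reduceMod, even_two,
    Even.neg_pow, one_pow, Fin.reduceLT, zero_sub, Nat.mod_succ]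
  ring

section FrenetInvariance

variable {m n : ℕ} (y : ℝ → EuclideanSpace ℝ (Fin n)) (j : ℕ) (t : ℝ)

theorem gramDet_const_add (c : EuclideanSpace ℝ (Fin n)) :
    gramDet (fun s => c + y s) j t = gramDet y j t := by
  simp only [gramDet, iteratedDeriv_const_add (Nat.succ_pos _)]

theorem gramDet_const_smul (r : ℝ) :
    gramDet (fun s => r • y s) j t = (r ^ 2) ^ j * gramDet y j t := by
  have hM : (Matrix.of fun a b : Fin j =>
      inner ℝ (iteratedDeriv (a.val + 1) (fun s => r • y s) t)
        (iteratedDeriv (b.val + 1) (fun s => r • y s) t)) =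
      (r ^ 2) • Matrix.of fun a b : Fin j =>
        inner ℝ (iteratedDeriv (a.val + 1) y t) (iteratedDeriv (b.val + 1) y t) := by
    ext a b
    simp only [Matrix.of_apply, Matrix.smul_apply, smul_eq_mul, iteratedDeriv_fun_const_smul_field,
      real_inner_smul_left, real_inner_smul_right]
    ring
  rw [gramDet, hM, Matrix.det_smul, Fintype.card_fin, gramDet]

theorem gramDet_linearIsometry_comp (L : EuclideanSpace ℝ (Fin n) →ₗᵢ[ℝ] EuclideanSpace ℝ (Fin m))
    {k : ℕ} (hy : ContDiff ℝ k y) (hj : j ≤ k) :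
    gramDet (fun s => L (y s)) j t = gramDet y j t := by
  have hL : ∀ i : ℕ, i ≤ k → iteratedDeriv i (fun s => L (y s)) t = L (iteratedDeriv i y t) :=
    fun i hi => L.toContinuousLinearMap.iteratedDeriv_comp_left hy (by exact_mod_cast hi) t
  unfold gramDet
  congr 1
  ext a b
  rw [Matrix.of_apply, Matrix.of_apply, hL _ (by omega), hL _ (by omega), L.inner_map_map]

theorem frenetCurvature_const_add (c : EuclideanSpace ℝ (Fin n)) :
    frenetCurvature (fun s => c + y s) j t = frenetCurvature y j t := by
  simp only [frenetCurvature, gramDet_const_add, deriv_const_add]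

theorem frenetCurvature_const_smul (hj : j ≠ 0) (r : ℝ) :
    frenetCurvature (fun s => r • y s) j t = |r|⁻¹ * frenetCurvature y j t := by
  obtain ⟨i, rfl⟩ := Nat.exists_eq_succ_of_ne_zero hj
  rcases eq_or_ne r 0 with rfl | hr
  · simp [frenetCurvature]
  simp only [frenetCurvature, gramDet_const_smul, deriv_fun_const_smul_field, norm_smul,
    Real.norm_eq_abs, Nat.succ_sub_one]
  rw [show (r ^ 2) ^ (i + 1 + 1) * gramDet y (i + 1 + 1) t * ((r ^ 2) ^ i * gramDet y i t) =
      ((r ^ 2) ^ (i + 1)) ^ 2 * (gramDet y (i + 1 + 1) t * gramDet y i t) by ring,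
    Real.sqrt_mul (by positivity), Real.sqrt_sq (by positivity)]
  field_simp

theorem frenetCurvature_linearIsometry_comp
    (L : EuclideanSpace ℝ (Fin n) →ₗᵢ[ℝ] EuclideanSpace ℝ (Fin m)) (hy : ContDiff ℝ (j + 1) y) :
    frenetCurvature (fun s => L (y s)) j t = frenetCurvature y j t := by
  have hderiv : deriv (fun s => L (y s)) t = L (deriv y t) := by
    simpa only [iteratedDeriv_one, LinearIsometry.coe_toContinuousLinearMap] using
      L.toContinuousLinearMap.iteratedDeriv_comp_left hy (i := 1) (by exact_mod_cast le_add_self) t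
  simp only [frenetCurvature, hderiv, L.norm_map, gramDet_linearIsometry_comp y _ t L hy le_rfl,
    gramDet_linearIsometry_comp y _ t L hy (Nat.le_succ j),
    gramDet_linearIsometry_comp y _ t L hy (by omega : j - 1 ≤ j + 1)]

end FrenetInvariance

noncomputable def curveXPerp (a₁ a₂ α₁ α₂ : ℝ) : ℝ → EuclideanSpace ℝ (Fin 4) :=
  fun t => !₂[-a₁ * sin (α₁ * t), a₁ * cos (α₁ * t), -a₂ * sin (α₂ * t), a₂ * cos (α₂ * t)]

section CurveX

variable (a₁ a₂ α₁ α₂ : ℝ)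

theorem contDiff_curveX {k : WithTop ℕ∞} : ContDiff ℝ k (curveX a₁ a₂ α₁ α₂) := by
  refine (contDiff_piLp 2).2 fun i => ?_
  fin_cases i <;>
    simp only [curveX, WithLp.equiv_symm_apply, Fin.isValue, Fin.zero_eta, Fin.mk_one,
      Fin.reduceFinMk, Matrix.cons_val_zero, Matrix.cons_val_one, Matrix.cons_val] <;>
    fun_prop

theorem deriv_curveX : deriv (curveX a₁ a₂ α₁ α₂) = curveXPerp (a₁ * α₁) (a₂ * α₂) α₁ α₂ := by
  funext t
  refine (hasDerivAt_euclideanSpace fun i => ?_).deriv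
  fin_cases i
  · exact hasDerivAt_mul_cos_mul a₁ α₁ t
  · exact hasDerivAt_mul_sin_mul a₁ α₁ t
  · exact hasDerivAt_mul_cos_mul a₂ α₂ t
  · exact hasDerivAt_mul_sin_mul a₂ α₂ t

theorem deriv_curveXPerp :
    deriv (curveXPerp a₁ a₂ α₁ α₂) = curveX (-(a₁ * α₁)) (-(a₂ * α₂)) α₁ α₂ := by
  funext t
  refine (hasDerivAt_euclideanSpace fun i => ?_).deriv
  fin_cases i
  · simpa [curveX, curveXPerp] using hasDerivAt_mul_sin_mul (-a₁) α₁ t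
  · simpa [curveX, curveXPerp] using hasDerivAt_mul_cos_mul a₁ α₁ t
  · simpa [curveX, curveXPerp] using hasDerivAt_mul_sin_mul (-a₂) α₂ t
  · simpa [curveX, curveXPerp] using hasDerivAt_mul_cos_mul a₂ α₂ t

variable (b₁ b₂ t : ℝ)

theorem inner_curveX_curveX :
    inner ℝ (curveX a₁ a₂ α₁ α₂ t) (curveX b₁ b₂ α₁ α₂ t) = a₁ * b₁ + a₂ * b₂ := by
  simp only [curveX, WithLp.equiv_symm_apply, PiLp.inner_apply, RCLike.inner_apply, ringHom_apply,
    Fin.sum_univ_four, Fin.isValue, Matrix.cons_val_zero, Matrix.cons_val_one, Matrix.cons_val]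
  linear_combination a₁ * b₁ * sin_sq_add_cos_sq (α₁ * t) + a₂ * b₂ * sin_sq_add_cos_sq (α₂ * t)

theorem inner_curveXPerp_curveXPerp :
    inner ℝ (curveXPerp a₁ a₂ α₁ α₂ t) (curveXPerp b₁ b₂ α₁ α₂ t) = a₁ * b₁ + a₂ * b₂ := by
  simp only [curveXPerp, PiLp.inner_apply, RCLike.inner_apply, ringHom_apply, Fin.sum_univ_four,
    Fin.isValue, Matrix.cons_val_zero, Matrix.cons_val_one, Matrix.cons_val]
  linear_combination a₁ * b₁ * sin_sq_add_cos_sq (α₁ * t) + a₂ * b₂ * sin_sq_add_cos_sq (α₂ * t)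

theorem inner_curveX_curveXPerp :
    inner ℝ (curveX a₁ a₂ α₁ α₂ t) (curveXPerp b₁ b₂ α₁ α₂ t) = 0 := by
  simp only [curveX, WithLp.equiv_symm_apply, curveXPerp, PiLp.inner_apply, RCLike.inner_apply,
    ringHom_apply, Fin.sum_univ_four, Fin.isValue, Matrix.cons_val_zero, Matrix.cons_val_one,
    Matrix.cons_val]
  ring

theorem inner_curveXPerp_curveX :
    inner ℝ (curveXPerp a₁ a₂ α₁ α₂ t) (curveX b₁ b₂ α₁ α₂ t) = 0 := by
  rw [real_inner_comm, inner_curveX_curveXPerp]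

theorem norm_deriv_curveX :
    ‖deriv (curveX a₁ a₂ α₁ α₂) t‖ = √(a₁ ^ 2 * α₁ ^ 2 + a₂ ^ 2 * α₂ ^ 2) := by
  rw [deriv_curveX, norm_eq_sqrt_real_inner, inner_curveXPerp_curveXPerp]
  ring_nf

theorem gramDet_curveX_two_s16 :
    gramDet (curveX a₁ a₂ α₁ α₂) 2 t =
      (a₁ ^ 2 * α₁ ^ 2 + a₂ ^ 2 * α₂ ^ 2) * (a₁ ^ 2 * α₁ ^ 4 + a₂ ^ 2 * α₂ ^ 4) := by
  simp only [gramDet, Matrix.det_fin_two, Matrix.of_apply, Fin.isValue, Fin.val_zero, Fin.val_one,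
    iteratedDeriv_succ', iteratedDeriv_zero, deriv_curveX, deriv_curveXPerp, inner_curveX_curveX,
    inner_curveXPerp_curveXPerp, inner_curveX_curveXPerp, inner_curveXPerp_curveX]
  ring

theorem gramDet_curveX_three_s16 :
    gramDet (curveX a₁ a₂ α₁ α₂) 3 t =
      (a₁ ^ 2 * α₁ ^ 4 + a₂ ^ 2 * α₂ ^ 4) * (a₁ * a₂ * α₁ * α₂ * (α₁ ^ 2 - α₂ ^ 2)) ^ 2 := by
  simp only [gramDet, Matrix.det_fin_three, Matrix.of_apply, Fin.isValue, Fin.val_zero,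
    Fin.val_one, Fin.val_two, iteratedDeriv_succ', iteratedDeriv_zero, deriv_curveX,
    deriv_curveXPerp, inner_curveX_curveX, inner_curveXPerp_curveXPerp, inner_curveX_curveXPerp,
    inner_curveXPerp_curveX]
  ring

theorem gramDet_curveX_four_s16 :
    gramDet (curveX a₁ a₂ α₁ α₂) 4 t =
      (α₁ * α₂) ^ 2 * (a₁ * a₂ * α₁ * α₂ * (α₁ ^ 2 - α₂ ^ 2)) ^ 4 := by
  set m : ℕ → ℝ := fun k => a₁ ^ 2 * α₁ ^ k + a₂ ^ 2 * α₂ ^ k with hm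
  have hG : (Matrix.of fun a b : Fin 4 => inner ℝ (iteratedDeriv (a.val + 1) (curveX a₁ a₂ α₁ α₂) t)
      (iteratedDeriv (b.val + 1) (curveX a₁ a₂ α₁ α₂) t)) =
      !![m 2, 0, -m 4, 0; 0, m 4, 0, -m 6; -m 4, 0, m 6, 0; 0, -m 6, 0, m 8] := by
    ext a b
    fin_cases a <;> fin_cases b <;>
      simp only [Matrix.of_apply, Matrix.cons_val', Matrix.cons_val, Matrix.cons_val_zero,
        Matrix.cons_val_one, Matrix.cons_val_fin_one, Fin.isValue, Fin.zero_eta, Fin.mk_one,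
        Fin.reduceFinMk, Fin.coe_ofNat_eq_mod, Nat.reduceMod, iteratedDeriv_succ',
        iteratedDeriv_zero, deriv_curveX, deriv_curveXPerp, inner_curveX_curveX,
        inner_curveXPerp_curveXPerp, inner_curveX_curveXPerp, inner_curveXPerp_curveX, hm] <;>
      ring
  rw [gramDet, hG, Matrix.det_checkerboard]
  ring

theorem frenetCurvature_curveX_three (ha₁ : a₁ ≠ 0) (ha₂ : a₂ ≠ 0) (hα₁ : α₁ ≠ 0) (hα₂ : α₂ ≠ 0)
    (hα : α₁ ^ 2 ≠ α₂ ^ 2) :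
    frenetCurvature (curveX a₁ a₂ α₁ α₂) 3 t =
      |α₁ * α₂| / √(a₁ ^ 2 * α₁ ^ 4 + a₂ ^ 2 * α₂ ^ 4) := by
  rw [frenetCurvature, gramDet_curveX_four_s16, gramDet_curveX_three_s16, Nat.add_one_sub_one,
    gramDet_curveX_two_s16, norm_deriv_curveX]
  have hK : a₁ * a₂ * α₁ * α₂ * (α₁ ^ 2 - α₂ ^ 2) ≠ 0 := by
    simp [ha₁, ha₂, hα₁, hα₂, sub_ne_zero.2 hα]
  set K := a₁ * a₂ * α₁ * α₂ * (α₁ ^ 2 - α₂ ^ 2)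
  set m₂ := a₁ ^ 2 * α₁ ^ 2 + a₂ ^ 2 * α₂ ^ 2
  set m₄ := a₁ ^ 2 * α₁ ^ 4 + a₂ ^ 2 * α₂ ^ 4
  have hm₂ : 0 < m₂ := by positivity
  have hm₄ : 0 < m₄ := by positivity
  rw [show (α₁ * α₂) ^ 2 * K ^ 4 * (m₂ * m₄) = (|α₁ * α₂| * K ^ 2) ^ 2 * (m₂ * m₄) by
      rw [mul_pow |α₁ * α₂|, sq_abs]; ring,
    Real.sqrt_mul (by positivity), Real.sqrt_sq (by positivity), Real.sqrt_mul hm₂.le]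
  field_simp
  rw [Real.sq_sqrt hm₄.le]

end CurveX

theorem norm_oscW_sq (x : ℝ → EuclideanSpace ℝ (Fin 4)) (t : ℝ) :
    ‖oscW x t‖ ^ 2 =
      ‖deriv x t‖ ^ 2 * ‖deriv (deriv x) t‖ ^ 2 - inner ℝ (deriv x t) (deriv (deriv x) t) ^ 2 := by
  simp only [oscW, WithLp.equiv_symm_apply, EuclideanSpace.norm_sq_eq, Real.norm_eq_abs, sq_abs,
    PiLp.inner_apply, RCLike.inner_apply, ringHom_apply, Fin.sum_univ_four, Fin.sum_univ_six,
    Fin.isValue, Matrix.cons_val_zero, Matrix.cons_val_one, Matrix.cons_val]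
  ring

/-- Onto the Plücker coordinates `w₁₃, w₁₄, w₂₃, w₂₄`, which mix the two rotation planes of `x`. -/
noncomputable def mixedPlueckerIsometry :
    EuclideanSpace ℝ (Fin 4) →ₗᵢ[ℝ] EuclideanSpace ℝ (Fin 6) :=
  LinearMap.isometryOfInner
    { toFun := fun x => (√2)⁻¹ • !₂[0, x 1 + x 3, x 0 - x 2, -x 0 - x 2, x 1 - x 3, 0]
      map_add' := fun x y => by
        rw [← smul_add]
        congr 1
        ext i
        fin_cases i <;>
          simp only [PiLp.add_apply, Fin.isValue, Fin.zero_eta, Fin.mk_one, Fin.reduceFinMk,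
            Matrix.cons_val_zero, Matrix.cons_val_one, Matrix.cons_val] <;>
          ring
      map_smul' := fun c x => by
        rw [smul_comm]
        congr 1
        ext i
        fin_cases i <;>
          simp only [PiLp.smul_apply, smul_eq_mul, ringHom_apply, Fin.isValue, Fin.zero_eta,
            Fin.mk_one, Fin.reduceFinMk, Matrix.cons_val_zero, Matrix.cons_val_one,
            Matrix.cons_val] <;>
          ring }
    fun x y => by
      simp only [LinearMap.coe_mk, AddHom.coe_mk, PiLp.inner_apply, PiLp.smul_apply, smul_eq_mul,
        RCLike.inner_apply, ringHom_apply, Fin.sum_univ_six, Fin.sum_univ_four, Fin.isValue,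
        Matrix.cons_val_zero, Matrix.cons_val_one, Matrix.cons_val]
      field_simp
      rw [Real.sq_sqrt zero_le_two]
      ring

theorem mixedPlueckerIsometry_apply (x : EuclideanSpace ℝ (Fin 4)) :
    mixedPlueckerIsometry x = (√2)⁻¹ • !₂[0, x 1 + x 3, x 0 - x 2, -x 0 - x 2, x 1 - x 3, 0] :=
  rfl

section OscIndCurveX

variable (a₁ a₂ α₁ α₂ : ℝ)

theorem norm_oscW_curveX (t : ℝ) :
    ‖oscW (curveX a₁ a₂ α₁ α₂) t‖ =
      √(a₁ ^ 2 * α₁ ^ 2 + a₂ ^ 2 * α₂ ^ 2) * √(a₁ ^ 2 * α₁ ^ 4 + a₂ ^ 2 * α₂ ^ 4) := by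
  rw [← Real.sqrt_mul (by positivity), ← Real.sqrt_sq (norm_nonneg _), norm_oscW_sq,
    deriv_curveX, deriv_curveXPerp, ← real_inner_self_eq_norm_sq, ← real_inner_self_eq_norm_sq,
    inner_curveXPerp_curveXPerp, inner_curveX_curveX, inner_curveXPerp_curveX]
  ring_nf

theorem oscW_curveX (t : ℝ) :
    oscW (curveX a₁ a₂ α₁ α₂) t =
      !₂[a₁ ^ 2 * α₁ ^ 3, 0, 0, 0, 0, a₂ ^ 2 * α₂ ^ 3] +
        mixedPlueckerIsometry (curveX (a₁ * a₂ * α₁ * α₂ * (α₁ + α₂) / √2)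
          (-(a₁ * a₂ * α₁ * α₂ * (α₁ - α₂) / √2)) (α₁ - α₂) (α₁ + α₂) t) := by
  rw [oscW, deriv_curveX, deriv_curveXPerp, mixedPlueckerIsometry_apply]
  ext i
  fin_cases i <;>
    simp only [curveX, curveXPerp, WithLp.equiv_symm_apply, PiLp.add_apply, PiLp.smul_apply,
      smul_eq_mul, Fin.isValue, Fin.zero_eta, Fin.mk_one, Fin.reduceFinMk, Matrix.cons_val_zero,
      Matrix.cons_val_one, Matrix.cons_val, sub_mul, add_mul, sin_sub, sin_add, cos_sub, cos_add]
  · linear_combination a₁ ^ 2 * α₁ ^ 3 * sin_sq_add_cos_sq (α₁ * t)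
  iterate 4
    · field_simp
      rw [Real.sq_sqrt zero_le_two]
      ring
  · linear_combination a₂ ^ 2 * α₂ ^ 3 * sin_sq_add_cos_sq (α₂ * t)

theorem oscInd_curveX :
    oscInd (curveX a₁ a₂ α₁ α₂) = fun t =>
      (√(a₁ ^ 2 * α₁ ^ 2 + a₂ ^ 2 * α₂ ^ 2) * √(a₁ ^ 2 * α₁ ^ 4 + a₂ ^ 2 * α₂ ^ 4))⁻¹ •
        (!₂[a₁ ^ 2 * α₁ ^ 3, 0, 0, 0, 0, a₂ ^ 2 * α₂ ^ 3] +
          mixedPlueckerIsometry (curveX (a₁ * a₂ * α₁ * α₂ * (α₁ + α₂) / √2)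
            (-(a₁ * a₂ * α₁ * α₂ * (α₁ - α₂) / √2)) (α₁ - α₂) (α₁ + α₂) t)) := by
  funext t
  rw [oscInd, norm_oscW_curveX, oscW_curveX]

end OscIndCurveX

theorem stmt16 (a₁ a₂ α₁ α₂ : ℝ) (ha₁ : 0 < a₁) (ha₂ : 0 < a₂)
    (hα₁ : 0 < α₁) (hα₂ : 0 < α₂) (hne : α₁ ≠ α₂) (lam : ℝ)
    (hlam : lam = Real.sqrt (a₁ ^ 2 * α₁ ^ 2 + a₂ ^ 2 * α₂ ^ 2) * Real.sqrt (a₁ ^ 2 * α₁ ^ 4 + a₂ ^ 2 * α₂ ^ 4)) :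
    ∀ t : ℝ, frenetCurvature (oscInd (curveX a₁ a₂ α₁ α₂)) 3 t
      = lam / (a₁ * a₂ * α₁ * α₂ * Real.sqrt (α₁ ^ 2 + α₂ ^ 2)) := by
  intro t
  have hlam_pos : 0 < lam := by rw [hlam]; positivity
  have hβ : α₁ - α₂ ≠ 0 := sub_ne_zero.2 hne
  have hγ : α₁ + α₂ ≠ 0 := by positivity
  rw [oscInd_curveX, ← hlam, frenetCurvature_const_smul _ _ _ three_ne_zero,
    frenetCurvature_const_add,
    frenetCurvature_linearIsometry_comp _ _ _ _ (contDiff_curveX _ _ _ _),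
    frenetCurvature_curveX_three _ _ _ _ _ (by positivity)
      (by simp [hβ, ha₁.ne', ha₂.ne', hα₁.ne', hα₂.ne']) hβ hγ (by nlinarith)]
  have hm₄ : (a₁ * a₂ * α₁ * α₂ * (α₁ + α₂) / √2) ^ 2 * (α₁ - α₂) ^ 4 +
      (-(a₁ * a₂ * α₁ * α₂ * (α₁ - α₂) / √2)) ^ 2 * (α₁ + α₂) ^ 4 =
      (a₁ * a₂ * α₁ * α₂ * |(α₁ - α₂) * (α₁ + α₂)|) ^ 2 * (α₁ ^ 2 + α₂ ^ 2) := by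
    rw [mul_pow _ |_|, sq_abs, div_pow, neg_sq, div_pow, Real.sq_sqrt zero_le_two]
    ring
  rw [hm₄, Real.sqrt_mul (by positivity), Real.sqrt_sq (by positivity), abs_inv,
    abs_of_pos hlam_pos, inv_inv]
  field_simp
end
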